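/- arXiv:2603.15338 — 2 statements merged into one kernel-verified Lean document; each statement's English description precedes it below -/
import Mathlib

section
/- Fix η ∈ (0, 1/2). Let m(n) be a sequence of voter numbers with m(n) = o(√n) and m(n) → m_0 ∈ ℕ, and let l_n be integers with l_n = η·n + o(√n). Then, in the discrete two-round voting model (over even n ≥ 6), lim_{n→∞} p_1(n, m(n), l_n) = p(∞, m_0, η). -/
open Finset Filter MeasureTheory

namespace TwoRound

/-- Candidate at position `r` (0-indexed) in the clockwise preference list
`(s, s+1, …, n, 1, …, s−1)` of the voter with seed `s ∈ {1,…,n}`. -/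
def prefAt (n s r : ℕ) : ℕ := (s - 1 + r) % n + 1

/-- The candidate of `S` that the voter with seed `s` votes for: the first element of the
clockwise preference list of `s` that belongs to `S`. -/
noncomputable def voteOf (n : ℕ) (S : Finset ℕ) (s : ℕ) : ℕ :=
  haveI : Decidable (∃ r, prefAt n s r ∈ S) := Classical.dec _
  if h : ∃ r, prefAt n s r ∈ S then prefAt n s (Nat.find h) else 0

/-- `Xi n S i s` : the number of votes cast for candidate `i` in an election among the
candidates of `S`, when the voters have seeds `s 0, …, s (m-1)`. -/
noncomputable def Xi (n : ℕ) {m : ℕ} (S : Finset ℕ) (i : ℕ) (s : Fin m → ℕ) : ℕ :=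
  haveI := Classical.decPred fun j : Fin m => voteOf n S (s j) = i
  (Finset.univ.filter fun j : Fin m => voteOf n S (s j) = i).card

/-- The seeds (valued in `{1,…,n}`) associated with a sample point `σ : Fin m → Fin n`. -/
def seed {m n : ℕ} (σ : Fin m → Fin n) (j : Fin m) : ℕ := (σ j : ℕ) + 1

/-- Probability of an event when the `m` voters choose their seeds independently and
uniformly at random on `{1,…,n}`. -/
noncomputable def Pr (n m : ℕ) (E : (Fin m → Fin n) → Prop) : ℝ :=
  haveI := Classical.decPred E
  ((Finset.univ.filter E).card : ℝ) / (n : ℝ) ^ m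

/-- The set `A = {1,…,l} ∪ {l+2i : 1 ≤ i ≤ (n−2l)/2}`. -/
def Acl (n l : ℕ) : Finset ℕ :=
  Finset.Icc 1 l ∪ (Finset.Icc 1 ((n - 2 * l) / 2)).image fun i => l + 2 * i

/-- The set `B = {1,…,n} \ A`. -/
def Bcl (n l : ℕ) : Finset ℕ := Finset.Icc 1 n \ Acl n l

/-- Candidate `1` wins the two-round election: `1` strictly uniquely maximizes `Ξ_A` over `A`,
some `w` strictly uniquely maximizes `Ξ_B` over `B`, and `1` strictly beats `w` head-to-head. -/
def Wins1 (n l : ℕ) {m : ℕ} (σ : Fin m → Fin n) : Prop :=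
  (∀ i ∈ Acl n l, i ≠ 1 → Xi n (Acl n l) i (seed σ) < Xi n (Acl n l) 1 (seed σ)) ∧
  ∃ w ∈ Bcl n l,
    (∀ i ∈ Bcl n l, i ≠ w → Xi n (Bcl n l) i (seed σ) < Xi n (Bcl n l) w (seed σ)) ∧
    Xi n {1, w} w (seed σ) < Xi n {1, w} 1 (seed σ)

/-- `p₁(n, m, l)` : the probability that candidate 1 wins the two-round election. -/
noncomputable def p1 (n m l : ℕ) : ℝ := Pr n m (Wins1 n l)

/-- The number of points among `x 0, …, x (m-1)` that lie in the set `I`. -/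
noncomputable def Ncount {m : ℕ} (x : Fin m → ℝ) (I : Set ℝ) : ℕ :=
  haveI := Classical.decPred fun j : Fin m => x j ∈ I
  (Finset.univ.filter fun j : Fin m => x j ∈ I).card

/-- The joint distribution of `m` i.i.d. points uniformly distributed on `[0,1)`. -/
noncomputable def unifCube (m : ℕ) : Measure (Fin m → ℝ) :=
  Measure.pi fun _ => volume.restrict (Set.Ico (0 : ℝ) 1)

/-- `p(∞, m, η)` : the probability of the continuous decisive event
`{N_(1−η,1) ≥ 2, N_(0,η) ≥ 2, N_(0,η) < m/2}` for `m` i.i.d. uniform points on `[0,1)`. -/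
noncomputable def pCont (m : ℕ) (η : ℝ) : ℝ :=
  (unifCube m {ω | 2 ≤ Ncount ω (Set.Ioo (1 - η) 1) ∧ 2 ≤ Ncount ω (Set.Ioo 0 η) ∧
      2 * Ncount ω (Set.Ioo 0 η) < m}).toReal

lemma prefAt_eq_add {n s r : ℕ} (hs : 1 ≤ s) (hr : s + r ≤ n) : prefAt n s r = s + r := by
  unfold prefAt
  have h1 : s - 1 + r < n := by omega
  rw [Nat.mod_eq_of_lt h1]; omega

lemma prefAt_wrap {n s : ℕ} (hs : 1 ≤ s) (hsn : s ≤ n) :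
    prefAt n s (n - s + 1) = 1 := by
  unfold prefAt
  have h1 : s - 1 + (n - s + 1) = n := by omega
  rw [h1, Nat.mod_self]

lemma voteOf_eq {n s r : ℕ} {S : Finset ℕ} (h : prefAt n s r ∈ S)
    (hmin : ∀ r' < r, prefAt n s r' ∉ S) : voteOf n S s = prefAt n s r := by
  have hex : ∃ r, prefAt n s r ∈ S := ⟨r, h⟩
  unfold voteOf
  rw [dif_pos hex]
  congr 1
  have h1 := Nat.find_spec hex
  have h2 : ¬ Nat.find hex < r := fun hlt => hmin _ hlt h1
  have h3 : ¬ r < Nat.find hex := fun hlt => Nat.find_min hex hlt h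
  omega

lemma mem_Acl {n l x : ℕ} (hn : Even n) (hl : 1 ≤ l) (hln : 2 * l ≤ n) :
    x ∈ Acl n l ↔ (1 ≤ x ∧ x ≤ l) ∨ (l < x ∧ x ≤ n - l ∧ Even (x - l)) := by
  obtain ⟨t, ht⟩ := hn
  unfold Acl
  simp only [Finset.mem_union, Finset.mem_Icc, Finset.mem_image]
  constructor
  · rintro (h | ⟨i, ⟨hi1, hi2⟩, rfl⟩)
    · exact Or.inl h
    · exact Or.inr ⟨by omega, by omega, ⟨i, by omega⟩⟩
  · rintro (h | ⟨h1, h2, ⟨i, hi⟩⟩)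
    · exact Or.inl h
    · exact Or.inr ⟨i, ⟨by omega, by omega⟩, by omega⟩

lemma mem_Bcl {n l x : ℕ} : x ∈ Bcl n l ↔ (1 ≤ x ∧ x ≤ n) ∧ x ∉ Acl n l := by
  unfold Bcl
  simp [Finset.mem_sdiff, Finset.mem_Icc]

section votes
variable {n l s : ℕ} (hn : Even n) (hl : 2 ≤ l) (hln : 2 * l + 4 ≤ n)

include hn hl hln

lemma voteA_spec (hs2 : 2 ≤ s) (hsn : s ≤ n) :
    voteOf n (Acl n l) s ∈ Acl n l ∧
      ((s ≤ n - l ∧ (voteOf n (Acl n l) s = s ∨ voteOf n (Acl n l) s = s + 1)) ∨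
        (n - l < s ∧ voteOf n (Acl n l) s = 1)) := by
  have hmA : ∀ x, x ∈ Acl n l ↔ (1 ≤ x ∧ x ≤ l) ∨ (l < x ∧ x ≤ n - l ∧ Even (x - l)) :=
    fun x => mem_Acl hn (by omega) (by omega)
  have hp0 : prefAt n s 0 = s := by rw [prefAt_eq_add (by omega) (by omega)]; omega
  rcases le_or_gt s l with hsl | hsl
  · -- s ∈ [2, l], vote = s
    have hmem : s ∈ Acl n l := (hmA s).mpr (Or.inl ⟨by omega, hsl⟩)
    have hv : voteOf n (Acl n l) s = s := by
      rw [voteOf_eq (hp0 ▸ hmem) (by omega)]; exact hp0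
    exact ⟨(by rw [hv]; exact hmem), Or.inl ⟨by omega, Or.inl hv⟩⟩
  · rcases le_or_gt s (n - l) with hsnl | hsnl
    · rcases Nat.even_or_odd (s - l) with hpar | hpar
      · -- s ∈ A
        have hmem : s ∈ Acl n l := (hmA s).mpr (Or.inr ⟨hsl, hsnl, hpar⟩)
        have hv : voteOf n (Acl n l) s = s := by
          rw [voteOf_eq (hp0 ▸ hmem) (by omega)]; exact hp0
        exact ⟨(by rw [hv]; exact hmem), Or.inl ⟨hsnl, Or.inl hv⟩⟩
      · -- s ∉ A, s+1 ∈ A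
        obtain ⟨t, ht⟩ := hn
        have hslt : s < n - l := by
          rcases Nat.lt_or_ge s (n - l) with h | h
          · exact h
          · exfalso; obtain ⟨u, hu⟩ := hpar; omega
        have hp1 : prefAt n s 1 = s + 1 := prefAt_eq_add (by omega) (by omega)
        have hmem1 : s + 1 ∈ Acl n l := by
          refine (hmA _).mpr (Or.inr ⟨by omega, by omega, ?_⟩)
          obtain ⟨u, hu⟩ := hpar; exact ⟨u + 1, by omega⟩
        have hnot : s ∉ Acl n l := by
          rw [hmA]
          rintro (h | ⟨_, _, hev⟩)
          · omega
          · obtain ⟨u, hu⟩ := hpar; obtain ⟨v, hv⟩ := hev; omega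
        have hv : voteOf n (Acl n l) s = s + 1 := by
          rw [voteOf_eq (hp1 ▸ hmem1) ?_]
          · exact hp1
          · intro r' hr'
            interval_cases r'
            rw [hp0]; exact hnot
        exact ⟨(by rw [hv]; exact hmem1), Or.inl ⟨hsnl, Or.inr hv⟩⟩
    · -- s ∈ (n-l, n], vote = 1
      have h1A : (1 : ℕ) ∈ Acl n l := (hmA 1).mpr (Or.inl ⟨le_refl _, by omega⟩)
      have hpw : prefAt n s (n - s + 1) = 1 := prefAt_wrap (by omega) hsn
      have hv : voteOf n (Acl n l) s = 1 := by
        rw [voteOf_eq (hpw ▸ h1A) ?_]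
        · exact hpw
        · intro r' hr'
          have hpr : prefAt n s r' = s + r' := prefAt_eq_add (by omega) (by omega)
          rw [hpr, hmA]
          rintro (h | h) <;> omega
      exact ⟨(by rw [hv]; exact h1A), Or.inr ⟨hsnl, hv⟩⟩

end votes

section votes2
variable {n l s : ℕ} (hn : Even n) (hl : 2 ≤ l) (hln : 2 * l + 4 ≤ n)
include hn hl hln

lemma voteB_spec (hs2 : 2 ≤ s) (hsn : s ≤ n) (hsl : s ≠ l + 1) :
    voteOf n (Bcl n l) s ∈ Bcl n l ∧
      ((s ≤ l ∧ voteOf n (Bcl n l) s = l + 1) ∨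
        (l + 2 ≤ s ∧ (voteOf n (Bcl n l) s = s ∨ voteOf n (Bcl n l) s = s + 1) ∧
          voteOf n (Bcl n l) s ≠ l + 1)) := by
  have hmA : ∀ x, x ∈ Acl n l ↔ (1 ≤ x ∧ x ≤ l) ∨ (l < x ∧ x ≤ n - l ∧ Even (x - l)) :=
    fun x => mem_Acl hn (by omega) (by omega)
  have hp0 : prefAt n s 0 = s := by rw [prefAt_eq_add (by omega) (by omega)]; omega
  rcases le_or_gt s l with hsle | hsgt
  · -- s ∈ [2, l] : vote = l + 1
    have hlp1B : l + 1 ∈ Bcl n l := by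
      rw [mem_Bcl]
      refine ⟨⟨by omega, by omega⟩, ?_⟩
      rw [hmA]
      rintro (h | ⟨_, _, hev⟩)
      · omega
      · obtain ⟨v, hv⟩ := hev; omega
    have hpr : prefAt n s (l + 1 - s) = l + 1 := by
      rw [prefAt_eq_add (by omega) (by omega)]; omega
    have hv : voteOf n (Bcl n l) s = l + 1 := by
      rw [voteOf_eq (hpr ▸ hlp1B) ?_]
      · exact hpr
      · intro r' hr'
        have hpr' : prefAt n s r' = s + r' := prefAt_eq_add (by omega) (by omega)
        rw [hpr', mem_Bcl]
        rintro ⟨_, hnA⟩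
        exact hnA ((hmA _).mpr (Or.inl ⟨by omega, by omega⟩))
    exact ⟨(by rw [hv]; exact hlp1B), Or.inl ⟨hsle, hv⟩⟩
  · rcases le_or_gt s (n - l) with hsnl | hsnl
    · have hsge : l + 2 ≤ s := by omega
      rcases Nat.even_or_odd (s - l) with hpar | hpar
      · -- s ∈ A, vote = s + 1
        have hsA : s ∈ Acl n l := (hmA s).mpr (Or.inr ⟨by omega, hsnl, hpar⟩)
        have hs1B : s + 1 ∈ Bcl n l := by
          rw [mem_Bcl]
          refine ⟨⟨by omega, by omega⟩, ?_⟩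
          rw [hmA]
          rintro (h | ⟨_, _, hev⟩)
          · omega
          · obtain ⟨v, hv⟩ := hev; obtain ⟨u, hu⟩ := hpar; omega
        have hp1 : prefAt n s 1 = s + 1 := prefAt_eq_add (by omega) (by omega)
        have hv : voteOf n (Bcl n l) s = s + 1 := by
          rw [voteOf_eq (hp1 ▸ hs1B) ?_]
          · exact hp1
          · intro r' hr'
            interval_cases r'
            rw [hp0, mem_Bcl]
            rintro ⟨_, hnA⟩; exact hnA hsA
        exact ⟨(by rw [hv]; exact hs1B), Or.inr ⟨hsge, Or.inr hv, by omega⟩⟩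
      · -- s ∈ B, vote = s
        have hsB : s ∈ Bcl n l := by
          rw [mem_Bcl]
          refine ⟨⟨by omega, by omega⟩, ?_⟩
          rw [hmA]
          rintro (h | ⟨_, _, hev⟩)
          · omega
          · obtain ⟨v, hv⟩ := hev; obtain ⟨u, hu⟩ := hpar; omega
        have hv : voteOf n (Bcl n l) s = s := by
          rw [voteOf_eq (hp0 ▸ hsB) (by omega)]; exact hp0
        exact ⟨(by rw [hv]; exact hsB), Or.inr ⟨hsge, Or.inl hv, by omega⟩⟩
    · -- s ∈ (n - l, n], vote = s
      have hsB : s ∈ Bcl n l := by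
        rw [mem_Bcl]
        refine ⟨⟨by omega, hsn⟩, ?_⟩
        rw [hmA]
        rintro (h | h) <;> omega
      have hv : voteOf n (Bcl n l) s = s := by
        rw [voteOf_eq (hp0 ▸ hsB) (by omega)]; exact hp0
      exact ⟨(by rw [hv]; exact hsB), Or.inr ⟨by omega, Or.inl hv, by omega⟩⟩

end votes2

lemma voteHead_w {n w s : ℕ} (h2w : 2 ≤ w) (hwn : w ≤ n) (hs2 : 2 ≤ s) (hsw : s ≤ w) :
    voteOf n {1, w} s = w := by
  have hpr : prefAt n s (w - s) = w := by
    rw [prefAt_eq_add (by omega) (by omega)]; omega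
  have hwm : w ∈ ({1, w} : Finset ℕ) := by simp
  rw [voteOf_eq (show prefAt n s (w - s) ∈ ({1, w} : Finset ℕ) by rw [hpr]; exact hwm) ?_]
  · exact hpr
  · intro r' hr'
    have hpr' : prefAt n s r' = s + r' := prefAt_eq_add (by omega) (by omega)
    rw [hpr']
    simp only [Finset.mem_insert, Finset.mem_singleton]
    omega

lemma voteHead_1 {n w s : ℕ} (h1w : 1 ≤ w) (hws : w < s) (hsn : s ≤ n) :
    voteOf n {1, w} s = 1 := by
  have hpr : prefAt n s (n - s + 1) = 1 := prefAt_wrap (by omega) hsn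
  have h1m : (1 : ℕ) ∈ ({1, w} : Finset ℕ) := by simp
  rw [voteOf_eq (show prefAt n s (n - s + 1) ∈ ({1, w} : Finset ℕ) by rw [hpr]; exact h1m) ?_]
  · exact hpr
  · intro r' hr'
    have hpr' : prefAt n s r' = s + r' := prefAt_eq_add (by omega) (by omega)
    rw [hpr']
    simp only [Finset.mem_insert, Finset.mem_singleton]
    omega


/-- seed-count in a set of candidate labels -/
noncomputable def cnt {m n : ℕ} (σ : Fin m → Fin n) (T : Finset ℕ) : ℕ :=
  haveI := Classical.decPred fun j : Fin m => seed σ j ∈ T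
  (Finset.univ.filter fun j : Fin m => seed σ j ∈ T).card

section xihelp
variable {n m : ℕ} {S : Finset ℕ} {i : ℕ} {s : Fin m → ℕ}

lemma Xi_eq (n : ℕ) {m : ℕ} (S : Finset ℕ) (i : ℕ) (s : Fin m → ℕ) :
    Xi n S i s =
      (Finset.univ.filter fun j : Fin m =>
        voteOf n S (s j) = i).card := by
  unfold Xi
  congr 1
  exact Finset.filter_congr_decidable _ _ _

lemma cnt_eq {m n : ℕ} (σ : Fin m → Fin n) (T : Finset ℕ) :
    cnt σ T = (Finset.univ.filter fun j : Fin m => seed σ j ∈ T).card := by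
  unfold cnt
  congr 1
  exact Finset.filter_congr_decidable _ _ _

lemma Xi_eq_cnt {σ : Fin m → Fin n} {T : Finset ℕ}
    (h : ∀ j, voteOf n S (seed σ j) = i ↔ seed σ j ∈ T) :
    Xi n S i (seed σ) = cnt σ T := by
  rw [Xi_eq, cnt_eq]
  congr 1
  exact Finset.filter_congr fun j _ => h j

lemma Xi_le_one (h : ∀ j k, voteOf n S (s j) = i → voteOf n S (s k) = i → j = k) :
    Xi n S i s ≤ 1 := by
  rw [Xi_eq, Finset.card_le_one]
  intro a ha b hb
  rw [Finset.mem_filter] at ha hb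
  exact h a b ha.2 hb.2

lemma one_le_Xi (j : Fin m) (h : voteOf n S (s j) = i) : 1 ≤ Xi n S i s := by
  rw [Xi_eq, Nat.one_le_iff_ne_zero, ← Nat.pos_iff_ne_zero, Finset.card_pos]
  exact ⟨j, Finset.mem_filter.mpr ⟨Finset.mem_univ _, h⟩⟩

lemma Xi_le_m : Xi n S i s ≤ m := by
  rw [Xi_eq]
  calc _ ≤ (Finset.univ : Finset (Fin m)).card := Finset.card_le_card (Finset.filter_subset _ _)
  _ = m := by simp

lemma Xi_eq_m (h : ∀ j, voteOf n S (s j) = i) : Xi n S i s = m := by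
  rw [Xi_eq, Finset.filter_true_of_mem fun j _ => h j]
  simp

lemma cnt_le_m {σ : Fin m → Fin n} {T : Finset ℕ} : cnt σ T ≤ m := by
  rw [cnt_eq]
  calc _ ≤ (Finset.univ : Finset (Fin m)).card := Finset.card_le_card (Finset.filter_subset _ _)
  _ = m := by simp

end xihelp



section key
variable {n l m : ℕ}

lemma seed_bounds {m n : ℕ} (σ : Fin m → Fin n) (j : Fin m) :
    1 ≤ seed σ j ∧ seed σ j ≤ n := by
  unfold seed
  have := (σ j).isLt
  omega

lemma key_equiv (hn : Even n) (hl : 2 ≤ l) (hln : 2 * l + 4 ≤ n) (σ : Fin m → Fin n)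
    (H1 : ∀ j, seed σ j ≠ 1 ∧ seed σ j ≠ l + 1)
    (H2 : ∀ j k, j ≠ k → seed σ j ≠ seed σ k ∧ seed σ j + 1 ≠ seed σ k ∧
      seed σ k + 1 ≠ seed σ j) :
    Wins1 n l σ ↔
      (2 ≤ cnt σ (Finset.Icc (n - l + 1) n) ∧ 2 ≤ cnt σ (Finset.Icc 2 l) ∧
        2 * cnt σ (Finset.Icc 2 l) < m) := by
  have hsb : ∀ j, 2 ≤ seed σ j ∧ seed σ j ≤ n := fun j => by
    have h1 := seed_bounds σ j
    have h2 := (H1 j).1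
    omega
  have hA := fun j => voteA_spec hn hl hln (hsb j).1 (hsb j).2
  have hB := fun j => voteB_spec hn hl hln (hsb j).1 (hsb j).2 (H1 j).2
  have hmA : ∀ x, x ∈ Acl n l ↔ (1 ≤ x ∧ x ≤ l) ∨ (l < x ∧ x ≤ n - l ∧ Even (x - l)) :=
    fun x => mem_Acl hn (by omega) (by omega)
  -- Ξ_A(1) = cnt R1
  have hXiA1 : Xi n (Acl n l) 1 (seed σ) = cnt σ (Finset.Icc (n - l + 1) n) := by
    apply Xi_eq_cnt
    intro j
    rw [Finset.mem_Icc]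
    have hsj := hsb j
    rcases (hA j).2 with ⟨hle, hv | hv⟩ | ⟨hgt, hv⟩ <;> rw [hv] <;> omega
  -- Ξ_A(i) ≤ 1 for i ≠ 1
  have hXiAle : ∀ i, i ≠ 1 → Xi n (Acl n l) i (seed σ) ≤ 1 := by
    intro i hi
    apply Xi_le_one
    intro j k hj hk
    by_contra hjk
    obtain ⟨hne, hs1, hs2⟩ := H2 j k hjk
    rcases (hA j).2 with ⟨hlej, hvj | hvj⟩ | ⟨hgtj, hvj⟩ <;>
      rcases (hA k).2 with ⟨hlek, hvk | hvk⟩ | ⟨hgtk, hvk⟩ <;> omega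
  -- Ξ_B(l+1) = cnt R2
  have hXiBl : Xi n (Bcl n l) (l + 1) (seed σ) = cnt σ (Finset.Icc 2 l) := by
    apply Xi_eq_cnt
    intro j
    rw [Finset.mem_Icc]
    have hsj := hsb j
    rcases (hB j).2 with ⟨hle, hv⟩ | ⟨hge, hv | hv, hne⟩ <;> rw [hv] <;> omega
  -- Ξ_B(i) ≤ 1 for i ≠ l+1
  have hXiBle : ∀ i, i ≠ l + 1 → Xi n (Bcl n l) i (seed σ) ≤ 1 := by
    intro i hi
    apply Xi_le_one
    intro j k hj hk
    by_contra hjk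
    obtain ⟨hne, hs1, hs2⟩ := H2 j k hjk
    rcases (hB j).2 with ⟨hlej, hvj⟩ | ⟨hgej, hvj | hvj, hnej⟩ <;>
      rcases (hB k).2 with ⟨hlek, hvk⟩ | ⟨hgek, hvk | hvk, hnek⟩ <;> omega
  -- head-to-head with l+1
  have hXiHw : Xi n {1, l + 1} (l + 1) (seed σ) = cnt σ (Finset.Icc 2 l) := by
    apply Xi_eq_cnt
    intro j
    rw [Finset.mem_Icc]
    have hsj := hsb j
    have hne1 := (H1 j).2
    rcases le_or_gt (seed σ j) (l + 1) with hle | hgt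
    · rw [voteHead_w (by omega) (by omega) hsj.1 hle]; omega
    · rw [voteHead_1 (by omega) hgt hsj.2]; omega
  have hXiH1 : Xi n {1, l + 1} 1 (seed σ) = m - cnt σ (Finset.Icc 2 l) := by
    have h1 : Xi n {1, l + 1} 1 (seed σ) = cnt σ (Finset.Icc (l + 2) n) := by
      apply Xi_eq_cnt
      intro j
      rw [Finset.mem_Icc]
      have hsj := hsb j
      have hne1 := (H1 j).2
      rcases le_or_gt (seed σ j) (l + 1) with hle | hgt
      · rw [voteHead_w (by omega) (by omega) hsj.1 hle]; omega
      · rw [voteHead_1 (by omega) hgt hsj.2]; omega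
    have h2 : cnt σ (Finset.Icc 2 l) + cnt σ (Finset.Icc (l + 2) n) = m := by
      rw [cnt_eq, cnt_eq]
      have h3 : (Finset.univ.filter fun j : Fin m => seed σ j ∈ Finset.Icc (l + 2) n) =
          (Finset.univ.filter fun j : Fin m => ¬ seed σ j ∈ Finset.Icc 2 l) := by
        apply Finset.filter_congr
        intro j _
        simp only [Finset.mem_Icc]
        have := hsb j
        have := (H1 j).2
        constructor <;> intro h <;> omega
      rw [h3, Finset.card_filter_add_card_filter_not]
      simp
    omega
  have hlp1B : l + 1 ∈ Bcl n l := by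
    rw [mem_Bcl]
    refine ⟨⟨by omega, by omega⟩, ?_⟩
    rw [hmA]
    rintro (h | ⟨_, _, hev⟩)
    · omega
    · obtain ⟨v, hv⟩ := hev; omega
  constructor
  · rintro ⟨hA1, w, hwB, hwmax, hhead⟩
    by_cases hwl : w = l + 1
    · subst hwl
      rw [hXiHw, hXiH1] at hhead
      have hcle : cnt σ (Finset.Icc 2 l) ≤ m := cnt_le_m
      have h3 : 2 * cnt σ (Finset.Icc 2 l) < m := by omega
      have hm1 : 1 ≤ m := by omega
      have h2 : 2 ≤ cnt σ (Finset.Icc 2 l) := by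
        by_contra hc
        push_neg at hc
        have hallw : ∀ j, voteOf n (Bcl n l) (seed σ j) = l + 1 := by
          intro j
          by_contra hne
          have hge1 : 1 ≤ Xi n (Bcl n l) (voteOf n (Bcl n l) (seed σ j)) (seed σ) :=
            one_le_Xi j rfl
          have := hwmax _ (hB j).1 hne
          omega
        have := Xi_eq_m hallw
        omega
      have h1 : 2 ≤ cnt σ (Finset.Icc (n - l + 1) n) := by
        by_contra hc
        push_neg at hc
        have hm5 : 5 ≤ m := by omega
        have hex : ∃ j, voteOf n (Acl n l) (seed σ j) ≠ 1 := by
          by_contra hall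
          push_neg at hall
          have := Xi_eq_m hall
          omega
        obtain ⟨j, hj⟩ := hex
        have hge1 : 1 ≤ Xi n (Acl n l) (voteOf n (Acl n l) (seed σ j)) (seed σ) :=
          one_le_Xi j rfl
        have := hA1 _ (hA j).1 hj
        omega
      exact ⟨h1, h2, h3⟩
    · exfalso
      have hwle : Xi n (Bcl n l) w (seed σ) ≤ 1 := hXiBle w hwl
      have hXile : Xi n {1, w} 1 (seed σ) ≤ m := Xi_le_m
      have hm1 : 1 ≤ m := by omega
      have hallw : ∀ j, voteOf n (Bcl n l) (seed σ j) = w := by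
        intro j
        by_contra hne
        have hge1 : 1 ≤ Xi n (Bcl n l) (voteOf n (Bcl n l) (seed σ j)) (seed σ) :=
          one_le_Xi j rfl
        have := hwmax _ (hB j).1 hne
        omega
      have hXiw : Xi n (Bcl n l) w (seed σ) = m := Xi_eq_m hallw
      have hmeq : m = 1 := by omega
      have hj0 : Fin m := ⟨0, by omega⟩
      have hvj0 := hallw hj0
      rcases (hB hj0).2 with ⟨hle, hv⟩ | ⟨hge, hv, hne⟩
      · exact hwl (by omega)
      · have hsw : seed σ hj0 ≤ w := by omega
        have hwn : w ≤ n := by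
          have := (mem_Bcl.mp (hwB)).1
          omega
        have hvh : voteOf n {1, w} (seed σ hj0) = w :=
          voteHead_w (by omega) hwn (hsb hj0).1 hsw
        have := one_le_Xi (S := {1, w}) hj0 hvh
        omega
  · rintro ⟨h1, h2, h3⟩
    refine ⟨?_, l + 1, hlp1B, ?_, ?_⟩
    · intro i hi hne
      have := hXiAle i hne
      omega
    · intro i hi hne
      have := hXiBle i hne
      omega
    · rw [hXiHw, hXiH1, hXiBl] at *
      have : cnt σ (Finset.Icc 2 l) ≤ m := cnt_le_m
      omega
end key

section prob
variable {n m l : ℕ}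

lemma Pr_eq (n m : ℕ) (E : (Fin m → Fin n) → Prop) [DecidablePred E] :
    Pr n m E = ((Finset.univ.filter E).card : ℝ) / (n : ℝ) ^ m := by
  unfold Pr
  rw [Finset.filter_congr_decidable]

/-- the good (generic) event -/
def Good (n l : ℕ) {m : ℕ} (σ : Fin m → Fin n) : Prop :=
  (∀ j, seed σ j ≠ 1 ∧ seed σ j ≠ l + 1) ∧
    ∀ j k, j ≠ k → seed σ j ≠ seed σ k ∧ seed σ j + 1 ≠ seed σ k ∧
      seed σ k + 1 ≠ seed σ j

instance GoodDec (n l : ℕ) {m : ℕ} (σ : Fin m → Fin n) : Decidable (Good n l σ) := by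
  unfold Good
  infer_instance

lemma Pr_nonneg (E : (Fin m → Fin n) → Prop) : 0 ≤ Pr n m E := by
  unfold Pr
  positivity

lemma abs_Pr_sub_le {E E' G : (Fin m → Fin n) → Prop}
    [DecidablePred E] [DecidablePred E'] [DecidablePred G]
    (hn : 0 < n) (h : ∀ σ, G σ → (E σ ↔ E' σ)) :
    |Pr n m E - Pr n m E'| ≤ Pr n m fun σ => ¬ G σ := by
  have hN : (0 : ℝ) < (n : ℝ) ^ m := by positivity
  have hsub : ∀ (P Q : (Fin m → Fin n) → Prop) [DecidablePred P] [DecidablePred Q],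
      (∀ σ, G σ → (P σ ↔ Q σ)) →
      ((Finset.univ.filter P).card : ℝ) ≤
        (Finset.univ.filter Q).card + (Finset.univ.filter fun σ => ¬ G σ).card := by
    intro P Q _ _ hPQ
    have hss : Finset.univ.filter P ⊆
        Finset.univ.filter Q ∪ Finset.univ.filter fun σ => ¬ G σ := by
      intro σ hσ
      rw [Finset.mem_filter] at hσ
      rw [Finset.mem_union, Finset.mem_filter, Finset.mem_filter]
      by_cases hG : G σ
      · exact Or.inl ⟨Finset.mem_univ _, (hPQ σ hG).mp hσ.2⟩
      · exact Or.inr ⟨Finset.mem_univ _, hG⟩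
    have := le_trans (Finset.card_le_card hss) (Finset.card_union_le _ _)
    exact_mod_cast this
  have h1 := hsub E E' h
  have h2 := hsub E' E fun σ hG => (h σ hG).symm
  rw [Pr_eq, Pr_eq, Pr_eq, abs_sub_le_iff]
  constructor <;> rw [div_sub_div_same, div_le_div_iff₀ hN hN] <;> nlinarith
end prob

section bad
variable {n m l : ℕ}

lemma card_piFinset_le (t : Fin m → Finset (Fin n)) :
    (Fintype.piFinset t).card = ∏ j, (t j).card := by
  simp [Fintype.card_piFinset]

lemma card_coord_le (j : Fin m) (K : ℕ) (P : Fin n → Prop) [DecidablePred P]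
    (hP : (Finset.univ.filter P).card ≤ K) :
    (Finset.univ.filter fun σ : Fin m → Fin n => P (σ j)).card ≤ K * n ^ (m - 1) := by
  have hss : (Finset.univ.filter fun σ : Fin m → Fin n => P (σ j)) ⊆
      Fintype.piFinset fun i => if i = j then Finset.univ.filter P else Finset.univ := by
    intro σ hσ
    rw [Finset.mem_filter] at hσ
    rw [Fintype.mem_piFinset]
    intro i
    by_cases hij : i = j
    · subst hij
      rw [if_pos rfl, Finset.mem_filter]
      exact ⟨Finset.mem_univ _, hσ.2⟩
    · rw [if_neg hij]
      exact Finset.mem_univ _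
  refine le_trans (Finset.card_le_card hss) ?_
  rw [card_piFinset_le]
  rw [← Finset.mul_prod_erase Finset.univ _ (Finset.mem_univ j), if_pos rfl]
  have hrest : ∏ i ∈ Finset.univ.erase j,
      (if i = j then Finset.univ.filter P else (Finset.univ : Finset (Fin n))).card
      = n ^ (m - 1) := by
    rw [Finset.prod_congr rfl fun i hi => by
      rw [if_neg (Finset.mem_erase.mp hi).1, Finset.card_univ, Fintype.card_fin]]
    rw [Finset.prod_const, Finset.card_erase_of_mem (Finset.mem_univ j)]
    simp
  rw [hrest]
  exact Nat.mul_le_mul_right _ hP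

lemma card_pair_le (j k : Fin m) (hjk : j ≠ k) (K : ℕ) (R : Fin n → Fin n → Prop)
    [∀ a b, Decidable (R a b)]
    (hR : ∀ a, (Finset.univ.filter fun b => R a b).card ≤ K) :
    (Finset.univ.filter fun σ : Fin m → Fin n => R (σ j) (σ k)).card ≤ K * n ^ (m - 1) := by
  have h2m : 2 ≤ m := by
    by_contra h
    push_neg at h
    have h1 := j.isLt
    have h2 := k.isLt
    exact hjk (Fin.ext (by omega))
  have hss : (Finset.univ.filter fun σ : Fin m → Fin n => R (σ j) (σ k)) ⊆
      Finset.univ.biUnion fun a : Fin n =>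
        Fintype.piFinset fun i =>
          if i = j then {a} else if i = k then Finset.univ.filter (R a) else Finset.univ := by
    intro σ hσ
    rw [Finset.mem_filter] at hσ
    rw [Finset.mem_biUnion]
    refine ⟨σ j, Finset.mem_univ _, ?_⟩
    rw [Fintype.mem_piFinset]
    intro i
    by_cases hij : i = j
    · subst hij; rw [if_pos rfl]; exact Finset.mem_singleton_self _
    · rw [if_neg hij]
      by_cases hik : i = k
      · subst hik
        rw [if_pos rfl, Finset.mem_filter]
        exact ⟨Finset.mem_univ _, hσ.2⟩
      · rw [if_neg hik]; exact Finset.mem_univ _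
  refine le_trans (Finset.card_le_card hss) ?_
  refine le_trans (Finset.card_biUnion_le) ?_
  have hcell : ∀ a : Fin n,
      (Fintype.piFinset fun i =>
        if i = j then ({a} : Finset (Fin n)) else
          if i = k then Finset.univ.filter (R a) else Finset.univ).card ≤ K * n ^ (m - 2) := by
    intro a
    rw [card_piFinset_le]
    rw [← Finset.mul_prod_erase Finset.univ _ (Finset.mem_univ j), if_pos rfl]
    have hkmem : k ∈ Finset.univ.erase j := Finset.mem_erase.mpr ⟨fun h => hjk h.symm, Finset.mem_univ _⟩
    rw [← Finset.mul_prod_erase _ _ hkmem, if_neg (fun h => hjk h.symm), if_pos rfl]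
    have hrest : ∏ i ∈ (Finset.univ.erase j).erase k,
        (if i = j then ({a} : Finset (Fin n)) else
          if i = k then Finset.univ.filter (R a) else Finset.univ).card = n ^ (m - 2) := by
      rw [Finset.prod_congr rfl fun i hi => by
        obtain ⟨hik, hi2⟩ := Finset.mem_erase.mp hi
        obtain ⟨hij, _⟩ := Finset.mem_erase.mp hi2
        rw [if_neg hij, if_neg hik, Finset.card_univ, Fintype.card_fin]]
      rw [Finset.prod_const, Finset.card_erase_of_mem hkmem,
        Finset.card_erase_of_mem (Finset.mem_univ j), Finset.card_univ, Fintype.card_fin]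
      congr 1
    rw [hrest, Finset.card_singleton, one_mul]
    exact Nat.mul_le_mul_right _ (hR a)
  refine le_trans (Finset.sum_le_sum fun a _ => hcell a) ?_
  rw [Finset.sum_const, Finset.card_univ, Fintype.card_fin, smul_eq_mul]
  have : n * (K * n ^ (m - 2)) = K * (n ^ (m - 2) * n) := by ring
  rw [this, ← pow_succ]
  have h2m2 : m - 2 + 1 = m - 1 := by omega
  rw [h2m2]
end bad

section notgood
variable {n m l : ℕ}

lemma card_single_val (v : ℕ) :
    (Finset.univ.filter fun a : Fin n => (a : ℕ) + 1 = v).card ≤ 1 := by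
  rw [Finset.card_le_one]
  intro a ha b hb
  rw [Finset.mem_filter] at ha hb
  exact Fin.ext (by omega)

lemma card_rel3 (n : ℕ) (a : Fin n) :
    (Finset.univ.filter fun b : Fin n =>
      ((a : ℕ) + 1 = (b : ℕ) + 1 ∨ (a : ℕ) + 1 + 1 = (b : ℕ) + 1 ∨
        (b : ℕ) + 1 + 1 = (a : ℕ) + 1)).card ≤ 3 := by
  have c1 : (Finset.univ.filter fun b : Fin n => (a : ℕ) + 1 = (b : ℕ) + 1).card ≤ 1 := by
    rw [Finset.card_le_one]
    intro x hx y hy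
    simp only [Finset.mem_filter] at hx hy
    exact Fin.ext (by omega)
  have c2 : (Finset.univ.filter fun b : Fin n => (a : ℕ) + 1 + 1 = (b : ℕ) + 1).card ≤ 1 := by
    rw [Finset.card_le_one]
    intro x hx y hy
    simp only [Finset.mem_filter] at hx hy
    exact Fin.ext (by omega)
  have c3 : (Finset.univ.filter fun b : Fin n => (b : ℕ) + 1 + 1 = (a : ℕ) + 1).card ≤ 1 := by
    rw [Finset.card_le_one]
    intro x hx y hy
    simp only [Finset.mem_filter] at hx hy
    exact Fin.ext (by omega)
  rw [Finset.filter_or, Finset.filter_or]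
  refine le_trans (Finset.card_union_le _ _) ?_
  refine le_trans (Nat.add_le_add_left (Finset.card_union_le _ _) _) ?_
  omega

lemma Pr_notGood_le (hn : 0 < n) :
    Pr n m (fun σ : Fin m → Fin n => ¬ Good n l σ) ≤ (2 * m + 3 * m * m) / n := by
  rcases Nat.eq_zero_or_pos m with hm | hm
  · subst hm
    have hempty : (Finset.univ.filter fun σ : Fin 0 → Fin n => ¬ Good n l σ) = ∅ := by
      rw [Finset.filter_eq_empty_iff]
      intro σ _
      intro hng
      exact hng ⟨fun j => j.elim0, fun j => j.elim0⟩
    rw [Pr_eq, hempty]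
    simp
  have hcard : (Finset.univ.filter fun σ : Fin m → Fin n => ¬ Good n l σ).card ≤
      (2 * m + 3 * m * m) * n ^ (m - 1) := by
    have hss : (Finset.univ.filter fun σ : Fin m → Fin n => ¬ Good n l σ) ⊆
        (Finset.univ.biUnion fun j : Fin m =>
          Finset.univ.filter fun σ : Fin m → Fin n =>
            ((σ j : ℕ) + 1 = 1 ∨ (σ j : ℕ) + 1 = l + 1)) ∪
        (Finset.univ.biUnion fun p : Fin m × Fin m =>
          Finset.univ.filter fun σ : Fin m → Fin n =>
            p.1 ≠ p.2 ∧ ((σ p.1 : ℕ) + 1 = (σ p.2 : ℕ) + 1 ∨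
              (σ p.1 : ℕ) + 1 + 1 = (σ p.2 : ℕ) + 1 ∨
              (σ p.2 : ℕ) + 1 + 1 = (σ p.1 : ℕ) + 1)) := by
      intro σ hσ
      rw [Finset.mem_filter] at hσ
      obtain ⟨-, hng⟩ := hσ
      rw [Finset.mem_union]
      by_cases hA : ∀ j : Fin m, seed σ j ≠ 1 ∧ seed σ j ≠ l + 1
      · right
        have hB : ¬ ∀ j k : Fin m, j ≠ k → seed σ j ≠ seed σ k ∧
            seed σ j + 1 ≠ seed σ k ∧ seed σ k + 1 ≠ seed σ j := fun hB => hng ⟨hA, hB⟩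
        push_neg at hB
        obtain ⟨j, k, hjk, hbad⟩ := hB
        rw [Finset.mem_biUnion]
        refine ⟨(j, k), Finset.mem_univ _, ?_⟩
        rw [Finset.mem_filter]
        refine ⟨Finset.mem_univ _, hjk, ?_⟩
        unfold seed at hbad
        by_cases h1 : (σ j : ℕ) + 1 = (σ k : ℕ) + 1
        · exact Or.inl h1
        · by_cases h2 : (σ j : ℕ) + 1 + 1 = (σ k : ℕ) + 1
          · exact Or.inr (Or.inl h2)
          · exact Or.inr (Or.inr (by tauto))
      · left
        push_neg at hA
        obtain ⟨j, hj⟩ := hA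
        rw [Finset.mem_biUnion]
        refine ⟨j, Finset.mem_univ _, ?_⟩
        rw [Finset.mem_filter]
        refine ⟨Finset.mem_univ _, ?_⟩
        unfold seed at hj
        tauto
    refine le_trans (Finset.card_le_card hss) (le_trans (Finset.card_union_le _ _) ?_)
    have h1 : (Finset.univ.biUnion fun j : Fin m =>
        Finset.univ.filter fun σ : Fin m → Fin n =>
          ((σ j : ℕ) + 1 = 1 ∨ (σ j : ℕ) + 1 = l + 1)).card ≤ m * (2 * n ^ (m - 1)) := by
      have hterm : ∀ j : Fin m, (Finset.univ.filter fun σ : Fin m → Fin n =>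
          ((σ j : ℕ) + 1 = 1 ∨ (σ j : ℕ) + 1 = l + 1)).card ≤ 2 * n ^ (m - 1) := by
        intro j
        exact card_coord_le j 2 (fun a : Fin n => (a : ℕ) + 1 = 1 ∨ (a : ℕ) + 1 = l + 1)
          (by
            rw [Finset.filter_or]
            exact le_trans (Finset.card_union_le _ _)
              (Nat.add_le_add (card_single_val 1) (card_single_val (l + 1))))
      refine le_trans Finset.card_biUnion_le
        (le_trans (Finset.sum_le_sum fun j _ => hterm j) ?_)
      rw [Finset.sum_const, Finset.card_univ, Fintype.card_fin, smul_eq_mul]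
    have h2 : (Finset.univ.biUnion fun p : Fin m × Fin m =>
        Finset.univ.filter fun σ : Fin m → Fin n =>
          p.1 ≠ p.2 ∧ ((σ p.1 : ℕ) + 1 = (σ p.2 : ℕ) + 1 ∨
            (σ p.1 : ℕ) + 1 + 1 = (σ p.2 : ℕ) + 1 ∨
            (σ p.2 : ℕ) + 1 + 1 = (σ p.1 : ℕ) + 1)).card ≤
        (m * m) * (3 * n ^ (m - 1)) := by
      have hterm2 : ∀ p : Fin m × Fin m, (Finset.univ.filter fun σ : Fin m → Fin n =>
          p.1 ≠ p.2 ∧ ((σ p.1 : ℕ) + 1 = (σ p.2 : ℕ) + 1 ∨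
            (σ p.1 : ℕ) + 1 + 1 = (σ p.2 : ℕ) + 1 ∨
            (σ p.2 : ℕ) + 1 + 1 = (σ p.1 : ℕ) + 1)).card ≤ 3 * n ^ (m - 1) := by
        intro p
        by_cases hp : p.1 = p.2
        · have : (Finset.univ.filter fun σ : Fin m → Fin n =>
              p.1 ≠ p.2 ∧ ((σ p.1 : ℕ) + 1 = (σ p.2 : ℕ) + 1 ∨
                (σ p.1 : ℕ) + 1 + 1 = (σ p.2 : ℕ) + 1 ∨
                (σ p.2 : ℕ) + 1 + 1 = (σ p.1 : ℕ) + 1)) = ∅ := by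
            rw [Finset.filter_eq_empty_iff]
            exact fun σ _ h => h.1 hp
          rw [this]
          exact Nat.zero_le _
        · have heq : (Finset.univ.filter fun σ : Fin m → Fin n =>
              p.1 ≠ p.2 ∧ ((σ p.1 : ℕ) + 1 = (σ p.2 : ℕ) + 1 ∨
                (σ p.1 : ℕ) + 1 + 1 = (σ p.2 : ℕ) + 1 ∨
                (σ p.2 : ℕ) + 1 + 1 = (σ p.1 : ℕ) + 1)) =
              (Finset.univ.filter fun σ : Fin m → Fin n =>
                ((σ p.1 : ℕ) + 1 = (σ p.2 : ℕ) + 1 ∨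
                (σ p.1 : ℕ) + 1 + 1 = (σ p.2 : ℕ) + 1 ∨
                (σ p.2 : ℕ) + 1 + 1 = (σ p.1 : ℕ) + 1)) := by
            apply Finset.filter_congr
            intro σ _
            simp [hp]
          rw [heq]
          exact card_pair_le p.1 p.2 hp 3
            (fun a b => ((a : ℕ) + 1 = (b : ℕ) + 1 ∨ (a : ℕ) + 1 + 1 = (b : ℕ) + 1 ∨
              (b : ℕ) + 1 + 1 = (a : ℕ) + 1)) (card_rel3 n)
      refine le_trans Finset.card_biUnion_le
        (le_trans (Finset.sum_le_sum fun p _ => hterm2 p) ?_)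
      rw [Finset.sum_const, Finset.card_univ, Fintype.card_prod, Fintype.card_fin,
        smul_eq_mul]
    calc _ ≤ m * (2 * n ^ (m - 1)) + (m * m) * (3 * n ^ (m - 1)) := Nat.add_le_add h1 h2
    _ = (2 * m + 3 * m * m) * n ^ (m - 1) := by ring
  rw [Pr_eq]
  have hnm : ((n : ℝ)) ^ m = (n : ℝ) ^ (m - 1) * n := by
    conv_lhs => rw [show m = (m - 1) + 1 by omega]
    rw [pow_succ]
  rw [div_le_div_iff₀ (by positivity) (by exact_mod_cast hn)]
  have hc : ((Finset.univ.filter fun σ : Fin m → Fin n => ¬ Good n l σ).card : ℝ) ≤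
      ((2 * m + 3 * m * m) : ℕ) * (n : ℝ) ^ (m - 1) := by
    exact_mod_cast hcard
  rw [hnm]
  push_cast at hc ⊢
  nlinarith [pow_nonneg (show (0:ℝ) ≤ n by positivity) (m - 1), hc]
end notgood

section count

/-- region 0 : seeds that vote for 1 in round A -/
def RA (n l : ℕ) : Finset ℕ := Finset.Icc (n - l + 1) n
/-- region 1 : seeds that vote for l+1 -/
def RB (l : ℕ) : Finset ℕ := Finset.Icc 2 l

def Rg (n l : ℕ) : Fin 3 → Finset ℕ :=
  ![RA n l, RB l, Finset.Icc 1 n \ (RA n l ∪ RB l)]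

def cls (n l : ℕ) (x : ℕ) : Fin 3 :=
  if x ∈ RA n l then 0 else if x ∈ RB l then 1 else 2

/-- the count event -/
def CountEv (n l : ℕ) {m : ℕ} (σ : Fin m → Fin n) : Prop :=
  2 ≤ cnt σ (RA n l) ∧ 2 ≤ cnt σ (RB l) ∧ 2 * cnt σ (RB l) < m

noncomputable instance CountEvDec (n l : ℕ) {m : ℕ} (σ : Fin m → Fin n) : Decidable (CountEv n l σ) := by
  unfold CountEv
  infer_instance

/-- the admissible class patterns -/
def OKp {m : ℕ} (c : Fin m → Fin 3) : Prop :=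
  2 ≤ (Finset.univ.filter fun j => c j = 0).card ∧
    2 ≤ (Finset.univ.filter fun j => c j = 1).card ∧
    2 * (Finset.univ.filter fun j => c j = 1).card < m

instance OKpDec {m : ℕ} (c : Fin m → Fin 3) : Decidable (OKp c) := by
  unfold OKp
  infer_instance

variable {n m l : ℕ}

lemma mem_Rg_iff (hl : 2 ≤ l) (hln : 2 * l + 4 ≤ n) {x : ℕ} (hx1 : 1 ≤ x) (hxn : x ≤ n)
    (k : Fin 3) : x ∈ Rg n l k ↔ cls n l x = k := by
  have hRA : x ∈ RA n l ↔ n - l + 1 ≤ x ∧ x ≤ n := Finset.mem_Icc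
  have hRB : x ∈ RB l ↔ 2 ≤ x ∧ x ≤ l := Finset.mem_Icc
  unfold cls
  fin_cases k
  · show x ∈ RA n l ↔ _
    split_ifs with h1 h2 <;> simp_all <;> omega
  · show x ∈ RB l ↔ _
    split_ifs with h1 h2 <;> simp_all <;> omega
  · show x ∈ Finset.Icc 1 n \ (RA n l ∪ RB l) ↔ _
    rw [Finset.mem_sdiff, Finset.mem_union, Finset.mem_Icc]
    split_ifs with h1 h2 <;> simp_all <;> omega

lemma Rg_subset (hl : 2 ≤ l) (hln : 2 * l + 4 ≤ n) (k : Fin 3) :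
    Rg n l k ⊆ Finset.Icc 1 n := by
  fin_cases k
  · show RA n l ⊆ _
    intro x hx
    rw [RA, Finset.mem_Icc] at hx
    rw [Finset.mem_Icc]
    omega
  · show RB l ⊆ _
    intro x hx
    rw [RB, Finset.mem_Icc] at hx
    rw [Finset.mem_Icc]
    omega
  · show Finset.Icc 1 n \ _ ⊆ _
    exact Finset.sdiff_subset

lemma card_seedFin {T : Finset ℕ} (hT : T ⊆ Finset.Icc 1 n) :
    (Finset.univ.filter fun a : Fin n => (a : ℕ) + 1 ∈ T).card = T.card := by
  apply Finset.card_bij (fun (a : Fin n) _ => (a : ℕ) + 1)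
  · intro a ha
    rw [Finset.mem_filter] at ha
    exact ha.2
  · intro a _ b _ hab
    exact Fin.ext (by omega)
  · intro t ht
    have hmem := Finset.mem_Icc.mp (hT ht)
    have htn : t - 1 < n := by omega
    refine ⟨⟨t - 1, htn⟩, ?_, by simp; omega⟩
    rw [Finset.mem_filter]
    refine ⟨Finset.mem_univ _, ?_⟩
    simpa using (by rw [show (t - 1) + 1 = t by omega]; exact ht : (t - 1) + 1 ∈ T)

lemma card_RA (hl : 2 ≤ l) (hln : 2 * l + 4 ≤ n) : (RA n l).card = l := by
  rw [RA, Nat.card_Icc]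
  omega

lemma card_RB (hl : 2 ≤ l) : (RB l).card = l - 1 := by
  rw [RB, Nat.card_Icc]
  omega

lemma card_Rg2 (hl : 2 ≤ l) (hln : 2 * l + 4 ≤ n) :
    (Rg n l 2).card = n - (2 * l - 1) := by
  show (Finset.Icc 1 n \ (RA n l ∪ RB l)).card = _
  have hdisj : Disjoint (RA n l) (RB l) := by
    rw [Finset.disjoint_left]
    intro x hx hx'
    rw [RA, Finset.mem_Icc] at hx
    rw [RB, Finset.mem_Icc] at hx'
    omega
  have hsub : RA n l ∪ RB l ⊆ Finset.Icc 1 n := by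
    intro x hx
    rw [Finset.mem_union] at hx
    rw [Finset.mem_Icc]
    rcases hx with hx | hx
    · rw [RA, Finset.mem_Icc] at hx; omega
    · rw [RB, Finset.mem_Icc] at hx; omega
  rw [Finset.card_sdiff_of_subset hsub, Finset.card_union_of_disjoint hdisj, Nat.card_Icc,
    card_RA hl hln, card_RB hl]
  omega

lemma Pr_CountEv_eq (hl : 2 ≤ l) (hln : 2 * l + 4 ≤ n) :
    Pr n m (CountEv n l) =
      ∑ c ∈ Finset.univ.filter (OKp (m := m)),
        ∏ j, ((Rg n l (c j)).card : ℝ) / (n : ℝ) := by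
  have hseedb : ∀ (σ : Fin m → Fin n) (j : Fin m), 1 ≤ seed σ j ∧ seed σ j ≤ n :=
    fun σ j => seed_bounds σ j
  have hmem : ∀ (σ : Fin m → Fin n) (j : Fin m) (k : Fin 3),
      seed σ j ∈ Rg n l k ↔ cls n l (seed σ j) = k :=
    fun σ j k => mem_Rg_iff hl hln (hseedb σ j).1 (hseedb σ j).2 k
  have hcnt : ∀ (σ : Fin m → Fin n) (k : Fin 3) (T : Finset ℕ), T = Rg n l k →
      cnt σ T = (Finset.univ.filter fun j => cls n l (seed σ j) = k).card := by
    intro σ k T hT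
    subst hT
    rw [cnt_eq]
    congr 1
    exact Finset.filter_congr fun j _ => hmem σ j k
  have hkey : (Finset.univ.filter (CountEv n l (m := m))) =
      (Finset.univ.filter (OKp (m := m))).biUnion fun c =>
        Fintype.piFinset fun j =>
          Finset.univ.filter fun a : Fin n => (a : ℕ) + 1 ∈ Rg n l (c j) := by
    ext σ
    rw [Finset.mem_filter, Finset.mem_biUnion]
    constructor
    · rintro ⟨-, hC⟩
      refine ⟨fun j => cls n l (seed σ j), ?_, ?_⟩
      · rw [Finset.mem_filter]
        refine ⟨Finset.mem_univ _, ?_⟩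
        obtain ⟨h1, h2, h3⟩ := hC
        rw [hcnt σ 0 (RA n l) rfl] at h1
        rw [hcnt σ 1 (RB l) rfl] at h2 h3
        exact ⟨h1, h2, h3⟩
      · rw [Fintype.mem_piFinset]
        intro j
        rw [Finset.mem_filter]
        exact ⟨Finset.mem_univ _, (hmem σ j _).mpr rfl⟩
    · rintro ⟨c, hcOK, hcmem⟩
      rw [Finset.mem_filter] at hcOK
      rw [Fintype.mem_piFinset] at hcmem
      have hc : ∀ j, cls n l (seed σ j) = c j := by
        intro j
        have := hcmem j
        rw [Finset.mem_filter] at this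
        exact (hmem σ j (c j)).mp this.2
      refine ⟨Finset.mem_univ _, ?_⟩
      obtain ⟨h1, h2, h3⟩ := hcOK.2
      have e0 : (Finset.univ.filter fun j => c j = 0) =
          (Finset.univ.filter fun j => cls n l (seed σ j) = 0) := by
        apply Finset.filter_congr
        intro j _
        rw [hc j]
      have e1 : (Finset.univ.filter fun j => c j = 1) =
          (Finset.univ.filter fun j => cls n l (seed σ j) = 1) := by
        apply Finset.filter_congr
        intro j _
        rw [hc j]
      rw [e0] at h1
      rw [e1] at h2 h3
      rw [CountEv, hcnt σ 0 (RA n l) rfl, hcnt σ 1 (RB l) rfl]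
      exact ⟨h1, h2, h3⟩
  rw [Pr_eq, hkey, Finset.card_biUnion]
  · push_cast
    rw [Finset.sum_div]
    apply Finset.sum_congr rfl
    intro c _
    rw [card_piFinset_le]
    have hcards : ∀ j : Fin m,
        ((Finset.univ.filter fun a : Fin n => (a : ℕ) + 1 ∈ Rg n l (c j)).card) =
          (Rg n l (c j)).card := fun j => card_seedFin (Rg_subset hl hln (c j))
    rw [Finset.prod_congr rfl fun j _ => hcards j]
    rw [Nat.cast_prod, Finset.prod_div_distrib, Finset.prod_const, Finset.card_univ,
      Fintype.card_fin]
  · intro c hc c' hc' hne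
    rw [Function.onFun, Finset.disjoint_left]
    intro σ hσ hσ'
    rw [Fintype.mem_piFinset] at hσ hσ'
    apply hne
    funext j
    have h1 := hσ j
    have h2 := hσ' j
    rw [Finset.mem_filter] at h1 h2
    have e1 : cls n l (seed σ j) = c j := (hmem σ j (c j)).mp h1.2
    have e2 : cls n l (seed σ j) = c' j := (hmem σ j (c' j)).mp h2.2
    rw [← e1, e2]
end count

section cont
variable {m : ℕ} {η : ℝ}

def Ig (η : ℝ) : Fin 3 → Set ℝ :=
  ![Set.Ioo (1 - η) 1, Set.Ioo 0 η, Set.Ico 0 1 \ (Set.Ioo (1 - η) 1 ∪ Set.Ioo 0 η)]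

noncomputable def clsC (η : ℝ) (x : ℝ) : Fin 3 :=
  if x ∈ Set.Ioo (1 - η) 1 then 0 else if x ∈ Set.Ioo 0 η then 1 else 2

lemma Ncount_eq (x : Fin m → ℝ) (I : Set ℝ) [DecidablePred fun j : Fin m => x j ∈ I] :
    Ncount x I = (Finset.univ.filter fun j : Fin m => x j ∈ I).card := by
  unfold Ncount
  rw [Finset.filter_congr_decidable]

lemma mem_Ig_iff (hη : η ∈ Set.Ioo (0 : ℝ) (1 / 2)) {x : ℝ} (hx : x ∈ Set.Ico (0 : ℝ) 1)
    (k : Fin 3) : x ∈ Ig η k ↔ clsC η x = k := by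
  obtain ⟨hη0, hη2⟩ := hη
  obtain ⟨hx0, hx1⟩ := hx
  unfold clsC
  fin_cases k
  · show x ∈ Set.Ioo (1 - η) 1 ↔ _
    constructor
    · intro h
      rw [if_pos h]
      rfl
    · intro h
      by_contra hc
      rw [if_neg hc] at h
      split_ifs at h <;> exact absurd h (by decide)
  · show x ∈ Set.Ioo 0 η ↔ _
    constructor
    · intro h
      have hA : x ∉ Set.Ioo (1 - η) 1 := by
        rintro ⟨h1, h2⟩
        obtain ⟨h3, h4⟩ := h
        linarith
      rw [if_neg hA, if_pos h]
      rfl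
    · intro h
      split_ifs at h with h1 h2
      · exact absurd h (by decide)
      · exact h2
      · exact absurd h (by decide)
  · show x ∈ Set.Ico 0 1 \ (Set.Ioo (1 - η) 1 ∪ Set.Ioo 0 η) ↔ _
    rw [Set.mem_diff, Set.mem_union]
    constructor
    · rintro ⟨hx', hno⟩
      push_neg at hno
      rw [if_neg hno.1, if_neg hno.2]
      rfl
    · intro h
      split_ifs at h with h1 h2
      · exact absurd h (by decide)
      · exact absurd h (by decide)
      · exact ⟨⟨hx0, hx1⟩, by tauto⟩

lemma Ig_subset (hη : η ∈ Set.Ioo (0 : ℝ) (1 / 2)) (k : Fin 3) :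
    Ig η k ⊆ Set.Ico 0 1 := by
  obtain ⟨hη0, hη2⟩ := hη
  fin_cases k
  · show Set.Ioo (1 - η) 1 ⊆ _
    intro x hx
    obtain ⟨h1, h2⟩ := hx
    exact ⟨by linarith, h2⟩
  · show Set.Ioo 0 η ⊆ _
    intro x hx
    obtain ⟨h1, h2⟩ := hx
    exact ⟨le_of_lt h1, by linarith⟩
  · exact Set.diff_subset

lemma Ig_measurable (k : Fin 3) : MeasurableSet (Ig η k) := by
  fin_cases k
  · exact measurableSet_Ioo
  · exact measurableSet_Ioo
  · exact (measurableSet_Ico.diff (measurableSet_Ioo.union measurableSet_Ioo))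

lemma Ig_volume (hη : η ∈ Set.Ioo (0 : ℝ) (1 / 2)) (k : Fin 3) :
    (volume.restrict (Set.Ico (0 : ℝ) 1)) (Ig η k) =
      ENNReal.ofReal (![η, η, 1 - 2 * η] k) := by
  obtain ⟨hη0, hη2⟩ := hη
  have hres : ∀ k : Fin 3, (volume.restrict (Set.Ico (0 : ℝ) 1)) (Ig η k) = volume (Ig η k) := by
    intro k
    rw [Measure.restrict_apply (Ig_measurable k)]
    rw [Set.inter_eq_left.mpr (Ig_subset ⟨hη0, hη2⟩ k)]
  rw [hres]
  fin_cases k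
  · show volume (Set.Ioo (1 - η) 1) = _
    rw [Real.volume_Ioo]
    norm_num
  · show volume (Set.Ioo (0 : ℝ) η) = _
    rw [Real.volume_Ioo]
    norm_num
  · show volume (Set.Ico (0:ℝ) 1 \ (Set.Ioo (1 - η) 1 ∪ Set.Ioo 0 η)) = _
    have hsub : Set.Ioo (1 - η) 1 ∪ Set.Ioo 0 η ⊆ Set.Ico (0:ℝ) 1 := by
      rintro x (hx | hx)
      · exact ⟨by linarith [hx.1], hx.2⟩
      · exact ⟨le_of_lt hx.1, by linarith [hx.2]⟩
    have hdisj : Disjoint (Set.Ioo (1 - η) 1) (Set.Ioo (0:ℝ) η) := by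
      rw [Set.disjoint_left]
      rintro x ⟨h1, h2⟩ ⟨h3, h4⟩
      linarith
    rw [measure_diff hsub ((measurableSet_Ioo.union measurableSet_Ioo).nullMeasurableSet)
      ((lt_of_le_of_lt (measure_mono hsub)
        (by rw [Real.volume_Ico]; exact ENNReal.ofReal_lt_top)).ne)]
    rw [measure_union hdisj measurableSet_Ioo, Real.volume_Ioo, Real.volume_Ioo, Real.volume_Ico]
    rw [← ENNReal.ofReal_add (by linarith) (by linarith)]
    rw [← ENNReal.ofReal_sub _ (by linarith)]
    norm_num
    ring_nf

lemma pCont_eq (hη : η ∈ Set.Ioo (0 : ℝ) (1 / 2)) :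
    pCont m η =
      ∑ c ∈ Finset.univ.filter (OKp (m := m)), ∏ j, (![η, η, 1 - 2 * η] (c j)) := by
  classical
  obtain ⟨hη0, hη2⟩ := hη
  set S : Set (Fin m → ℝ) := {ω | 2 ≤ Ncount ω (Set.Ioo (1 - η) 1) ∧
    2 ≤ Ncount ω (Set.Ioo 0 η) ∧ 2 * Ncount ω (Set.Ioo 0 η) < m} with hS
  set box : Set (Fin m → ℝ) := Set.univ.pi fun _ : Fin m => Set.Ico (0 : ℝ) 1 with hbox
  haveI hprob : IsProbabilityMeasure (volume.restrict (Set.Ico (0 : ℝ) 1)) := by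
    constructor
    rw [Measure.restrict_apply MeasurableSet.univ, Set.univ_inter, Real.volume_Ico]
    norm_num
  haveI : IsProbabilityMeasure (unifCube m) := by
    unfold unifCube
    infer_instance
  have hboxm : MeasurableSet box := MeasurableSet.univ_pi fun _ => measurableSet_Ico
  have hboxone : unifCube m box = 1 := by
    rw [hbox, unifCube, Measure.pi_pi]
    simp [measure_univ]
  have hcompl : unifCube m boxᶜ = 0 := by
    rw [measure_compl hboxm (by finiteness), hboxone, measure_univ, tsub_self]
  have hsplit : unifCube m S = unifCube m (S ∩ box) := by
    have h1 := measure_inter_add_diff (μ := unifCube m) S hboxm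
    have h2 : unifCube m (S \ box) = 0 :=
      le_antisymm (le_trans (measure_mono (Set.diff_subset_compl _ _)) hcompl.le) zero_le
    rw [← h1, h2, add_zero]
  have hmemIg : ∀ (ω : Fin m → ℝ), ω ∈ box → ∀ (j : Fin m) (k : Fin 3),
      ω j ∈ Ig η k ↔ clsC η (ω j) = k := by
    intro ω hω j k
    exact mem_Ig_iff ⟨hη0, hη2⟩ (hω j (Set.mem_univ _)) k
  have hcount : ∀ (ω : Fin m → ℝ), ω ∈ box → ∀ (k : Fin 3) (I : Set ℝ), I = Ig η k →
      Ncount ω I = (Finset.univ.filter fun j => clsC η (ω j) = k).card := by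
    intro ω hω k I hI
    subst hI
    rw [Ncount_eq]
    congr 1
    exact Finset.filter_congr fun j _ => hmemIg ω hω j k
  have hIg0 : Ig η 0 = Set.Ioo (1 - η) 1 := rfl
  have hIg1 : Ig η 1 = Set.Ioo 0 η := rfl
  have hdecomp : S ∩ box =
      ⋃ c ∈ (Finset.univ.filter (OKp (m := m)) : Finset (Fin m → Fin 3)),
        Set.univ.pi fun j => Ig η (c j) := by
    ext ω
    simp only [Set.mem_iUnion, Set.mem_inter_iff, Finset.mem_coe, Finset.mem_filter,
      Finset.mem_univ, true_and, Set.mem_pi, Set.mem_univ, forall_true_left]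
    constructor
    · rintro ⟨hωS, hωbox⟩
      refine ⟨fun j => clsC η (ω j), ?_, ?_⟩
      · obtain ⟨h1, h2, h3⟩ := hωS
        rw [hcount ω hωbox 0 _ hIg0.symm] at h1
        rw [hcount ω hωbox 1 _ hIg1.symm] at h2 h3
        exact ⟨h1, h2, h3⟩
      · intro j
        exact (hmemIg ω hωbox j _).mpr rfl
    · rintro ⟨c, hcOK, hcmem⟩
      have hωbox : ω ∈ box := by
        intro j _
        exact Ig_subset ⟨hη0, hη2⟩ (c j) (hcmem j)
      have hc : ∀ j, clsC η (ω j) = c j := fun j => (hmemIg ω hωbox j (c j)).mp (hcmem j)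
      refine ⟨?_, hωbox⟩
      obtain ⟨h1, h2, h3⟩ := hcOK
      have e0 : (Finset.univ.filter fun j => c j = 0) =
          (Finset.univ.filter fun j => clsC η (ω j) = 0) :=
        Finset.filter_congr fun j _ => by rw [hc j]
      have e1 : (Finset.univ.filter fun j => c j = 1) =
          (Finset.univ.filter fun j => clsC η (ω j) = 1) :=
        Finset.filter_congr fun j _ => by rw [hc j]
      rw [e0] at h1
      rw [e1] at h2 h3
      refine ⟨?_, ?_, ?_⟩
      · rw [hcount ω hωbox 0 _ hIg0.symm]; exact h1
      · rw [hcount ω hωbox 1 _ hIg1.symm]; exact h2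
      · rw [hcount ω hωbox 1 _ hIg1.symm]; exact h3
  have hmeas : unifCube m S =
      ∑ c ∈ Finset.univ.filter (OKp (m := m)),
        ∏ j, ENNReal.ofReal (![η, η, 1 - 2 * η] (c j)) := by
    rw [hsplit, hdecomp, measure_biUnion_finset ?_ ?_]
    · apply Finset.sum_congr rfl
      intro c _
      rw [unifCube, Measure.pi_pi]
      exact Finset.prod_congr rfl fun j _ => Ig_volume ⟨hη0, hη2⟩ (c j)
    · intro c hc c' hc' hne
      rw [Function.onFun, Set.disjoint_left]
      intro ω hω hω'
      rw [Set.mem_pi] at hω hω'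
      apply hne
      funext j
      have hωbox : ω ∈ box := fun j _ => Ig_subset ⟨hη0, hη2⟩ (c j) (hω j (Set.mem_univ _))
      have e1 := (hmemIg ω hωbox j (c j)).mp (hω j (Set.mem_univ _))
      have e2 := (hmemIg ω hωbox j (c' j)).mp (hω' j (Set.mem_univ _))
      rw [← e1, e2]
    · intro c _
      exact MeasurableSet.univ_pi fun j => Ig_measurable (c j)
  unfold pCont
  rw [← hS, hmeas]
  have hnn : ∀ k : Fin 3, 0 ≤ (![η, η, 1 - 2 * η] : Fin 3 → ℝ) k := by
    intro k
    fin_cases k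
    · show (0:ℝ) ≤ η; linarith
    · show (0:ℝ) ≤ η; linarith
    · show (0:ℝ) ≤ 1 - 2 * η; linarith
  rw [ENNReal.toReal_sum (fun c _ => ENNReal.prod_ne_top fun j _ => ENNReal.ofReal_ne_top)]
  apply Finset.sum_congr rfl
  intro c _
  rw [ENNReal.toReal_prod]
  exact Finset.prod_congr rfl fun j _ => ENNReal.toReal_ofReal (hnn (c j))
end cont

section limits
variable {η : ℝ}

lemma ratio_tendsto {l : ℕ → ℕ} {η : ℝ}
    (hlo : (fun n : ℕ => (l n : ℝ) - η * (n : ℝ)) =o[atTop] fun n : ℕ => Real.sqrt (n : ℝ)) :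
    Tendsto (fun n : ℕ => (l n : ℝ) / (n : ℝ)) atTop (nhds η) := by
  have hsq : (fun n : ℕ => Real.sqrt (n : ℝ)) =O[atTop] (fun n : ℕ => (n : ℝ)) := by
    apply Asymptotics.isBigO_of_le' (c := 1)
    intro n
    rw [one_mul, Real.norm_eq_abs, Real.norm_eq_abs, abs_of_nonneg (Real.sqrt_nonneg _),
      abs_of_nonneg (by positivity)]
    rcases Nat.eq_zero_or_pos n with h | h
    · subst h; simp
    · have h1 : (1 : ℝ) ≤ (n : ℝ) := by exact_mod_cast h
      calc Real.sqrt n ≤ Real.sqrt ((n : ℝ) * n) := by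
            apply Real.sqrt_le_sqrt; nlinarith
      _ = n := by rw [Real.sqrt_mul_self (by positivity)]
  have hlo' := hlo.trans_isBigO hsq
  have hdiv := hlo'.tendsto_div_nhds_zero
  have heq : ∀ᶠ n : ℕ in atTop, ((l n : ℝ) - η * n) / n + η = (l n : ℝ) / n := by
    filter_upwards [eventually_ge_atTop 1] with n hn
    have hn0 : (n : ℝ) ≠ 0 := by positivity
    field_simp
    ring
  have := (hdiv.add tendsto_const_nhds (b := η)).congr' heq
  simpa using this
end limits

theorem p1_tendsto_pCont' (η : ℝ) (hη : η ∈ Set.Ioo (0 : ℝ) (1 / 2))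
    (m l : ℕ → ℕ) (m0 : ℕ)
    (hmo : (fun n : ℕ => (m n : ℝ)) =o[atTop] fun n : ℕ => Real.sqrt (n : ℝ))
    (hmlim : Tendsto m atTop (nhds m0))
    (hlo : (fun n : ℕ => (l n : ℝ) - η * (n : ℝ)) =o[atTop] fun n : ℕ => Real.sqrt (n : ℝ)) :
    Tendsto (fun n : ℕ => p1 n (m n) (l n))
      (atTop ⊓ Filter.principal {n : ℕ | Even n ∧ 6 ≤ n}) (nhds (pCont m0 η)) := by
  classical
  obtain ⟨hη0, hη2⟩ := hη
  set L := atTop ⊓ Filter.principal {n : ℕ | Even n ∧ 6 ≤ n} with hL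
  have hLle : L ≤ atTop := inf_le_left
  -- eventually m n = m0
  have hmev : ∀ᶠ n in atTop, m n = m0 := by
    have hmem : {m0} ∈ nhds (m0 : ℕ) := by
      rw [nhds_discrete]
      exact mem_pure.mpr rfl
    filter_upwards [hmlim hmem] with n hn using hn
  -- ratio limit
  have hratio := ratio_tendsto hlo
  -- eventual bounds on l
  set c : ℝ := (η + 1 / 2) / 2 with hc
  have hcl : η < c := by rw [hc]; linarith
  have hc2 : 1 - 2 * c > 0 := by rw [hc]; linarith
  have hub : ∀ᶠ n in atTop, (l n : ℝ) / n < c := hratio (Iio_mem_nhds hcl)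
  have hlb : ∀ᶠ n in atTop, (l n : ℝ) / n > η / 2 := hratio (Ioi_mem_nhds (by linarith))
  have hNn1 : ∀ᶠ n : ℕ in atTop, (4 : ℝ) / η ≤ (n : ℝ) :=
    tendsto_natCast_atTop_atTop.eventually_ge_atTop _
  have hNn2 : ∀ᶠ n : ℕ in atTop, (4 : ℝ) / (1 - 2 * c) ≤ (n : ℝ) :=
    tendsto_natCast_atTop_atTop.eventually_ge_atTop _
  have hlbounds : ∀ᶠ n in atTop, 2 ≤ l n ∧ 2 * l n + 4 ≤ n := by
    filter_upwards [hub, hlb, hNn1, hNn2, eventually_ge_atTop 1] with n h1 h2 h3 h4 h5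
    have hn0 : (0 : ℝ) < (n : ℝ) := by exact_mod_cast h5
    have hlt : (l n : ℝ) < c * n := by
      rw [div_lt_iff₀ hn0] at h1
      linarith
    have hgt : (l n : ℝ) > η / 2 * n := by
      rw [gt_iff_lt, lt_div_iff₀ hn0] at h2
      linarith
    constructor
    · have : (2 : ℝ) ≤ (l n : ℝ) := by
        have h6 : η / 2 * n ≥ η / 2 * (4 / η) := by
          apply mul_le_mul_of_nonneg_left h3 (by linarith)
        have h7 : η / 2 * (4 / η) = 2 := by field_simp; ring
        linarith
      exact_mod_cast this
    · have h8 : (1 - 2 * c) * n ≥ 4 := by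
        have := mul_le_mul_of_nonneg_left h4 (le_of_lt hc2)
        rw [mul_div_cancel₀ _ (ne_of_gt hc2)] at this
        linarith
      have : (2 * l n + 4 : ℝ) ≤ (n : ℝ) := by nlinarith
      exact_mod_cast this
  -- eventual facts in L
  have hP : ∀ᶠ n in L, Even n ∧ 6 ≤ n := by
    rw [hL, eventually_inf_principal]
    filter_upwards with n hn using hn
  -- target
  have htarget : pCont m0 η =
      ∑ cc ∈ Finset.univ.filter (OKp (m := m0)), ∏ j, (![η, η, 1 - 2 * η] (cc j)) :=
    pCont_eq ⟨hη0, hη2⟩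
  -- discrete count sum converges
  have hsize : ∀ k : Fin 3,
      Tendsto (fun n : ℕ => ((Rg n (l n) k).card : ℝ) / n) L
        (nhds (![η, η, 1 - 2 * η] k)) := by
    intro k
    have hbnd : ∀ᶠ n in L, 2 ≤ l n ∧ 2 * l n + 4 ≤ n :=
      hlbounds.filter_mono hLle
    fin_cases k
    · show Tendsto _ L (nhds η)
      apply Tendsto.congr' _ (hratio.mono_left hLle)
      filter_upwards [hbnd] with n hn
      show ((l n : ℝ)) / n = ((RA n (l n)).card : ℝ) / n
      rw [card_RA hn.1 hn.2]
    · show Tendsto _ L (nhds η)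
      have h1 : Tendsto (fun n : ℕ => (l n : ℝ) / n - 1 / n) L (nhds (η - 0)) :=
        ((hratio.mono_left hLle).sub (tendsto_one_div_atTop_nhds_zero_nat.mono_left hLle))
      rw [sub_zero] at h1
      apply Tendsto.congr' _ h1
      filter_upwards [hbnd] with n hn
      show ((l n : ℝ)) / n - 1 / n = ((RB (l n)).card : ℝ) / n
      rw [card_RB hn.1]
      have : ((l n - 1 : ℕ) : ℝ) = (l n : ℝ) - 1 := by
        have := hn.1
        push_cast [Nat.cast_sub (by omega : 1 ≤ l n)]
        ring
      rw [this, sub_div]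
    · show Tendsto _ L (nhds (1 - 2 * η))
      have h1 : Tendsto (fun n : ℕ => 1 - 2 * ((l n : ℝ) / n) + 1 / n) L
          (nhds (1 - 2 * η + 0)) := by
        exact ((tendsto_const_nhds.sub ((hratio.mono_left hLle).const_mul 2)).add
          (tendsto_one_div_atTop_nhds_zero_nat.mono_left hLle))
      rw [add_zero] at h1
      apply Tendsto.congr' _ h1
      filter_upwards [hbnd, (eventually_ge_atTop 1).filter_mono hLle] with n hn hn1
      show 1 - 2 * ((l n : ℝ) / n) + 1 / n = ((Rg n (l n) 2).card : ℝ) / n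
      rw [card_Rg2 hn.1 hn.2]
      have hn0 : (n : ℝ) ≠ 0 := by positivity
      have hcast : ((n - (2 * l n - 1) : ℕ) : ℝ) = (n : ℝ) - 2 * (l n : ℝ) + 1 := by
        have h2 := hn.2
        push_cast [Nat.cast_sub (by omega : 2 * l n - 1 ≤ n), Nat.cast_sub (by omega : 1 ≤ 2 * l n)]
        ring
      rw [hcast]
      field_simp
  have hPrC : Tendsto (fun n : ℕ =>
      ∑ cc ∈ Finset.univ.filter (OKp (m := m0)),
        ∏ j, ((Rg n (l n) (cc j)).card : ℝ) / n) L
      (nhds (∑ cc ∈ Finset.univ.filter (OKp (m := m0)), ∏ j, (![η, η, 1 - 2 * η] (cc j)))) := by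
    apply tendsto_finset_sum
    intro cc _
    apply tendsto_finset_prod
    intro j _
    exact hsize (cc j)
  -- the error bound
  have herr : ∀ᶠ n in L, |p1 n (m n) (l n) -
      ∑ cc ∈ Finset.univ.filter (OKp (m := m0)),
        ∏ j, ((Rg n (l n) (cc j)).card : ℝ) / n| ≤ (2 * m0 + 3 * m0 * m0 : ℕ) / (n : ℝ) := by
    filter_upwards [hmev.filter_mono hLle, hlbounds.filter_mono hLle, hP]
      with n hm hln hPn
    obtain ⟨hEv, h6⟩ := hPn
    obtain ⟨hl2, hln2⟩ := hln
    have hn0 : 0 < n := by omega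
    rw [show p1 n (m n) (l n) = Pr n m0 (Wins1 n (l n)) by rw [p1, hm]]
    rw [← Pr_CountEv_eq hl2 hln2]
    have hiff : ∀ σ : Fin m0 → Fin n, Good n (l n) σ →
        (Wins1 n (l n) σ ↔ CountEv n (l n) σ) := by
      intro σ hG
      obtain ⟨hG1, hG2⟩ := hG
      have := key_equiv hEv hl2 hln2 σ hG1 hG2
      rw [this]
      rfl
    refine le_trans (abs_Pr_sub_le hn0 hiff) ?_
    have := Pr_notGood_le (n := n) (m := m0) (l := l n) hn0
    exact_mod_cast this
  -- conclude
  rw [htarget]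
  have hdiffto : Tendsto (fun n : ℕ => p1 n (m n) (l n) -
      ∑ cc ∈ Finset.univ.filter (OKp (m := m0)),
        ∏ j, ((Rg n (l n) (cc j)).card : ℝ) / n) L (nhds 0) := by
    apply squeeze_zero_norm' herr
    exact (tendsto_const_div_atTop_nhds_zero_nat _).mono_left hLle
  have := hdiffto.add hPrC
  rw [zero_add] at this
  apply this.congr
  intro n
  ring

/-- Discrete-to-continuous convergence (fixed limiting electorate): if `η ∈ (0,1/2)`,
`m(n) = o(√n)` with `m(n) → m₀`, and `l_n = ηn + o(√n)`, then
`p₁(n, m(n), l_n) → p(∞, m₀, η)` over even `n ≥ 6`. -/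
theorem p1_tendsto_pCont (η : ℝ) (hη : η ∈ Set.Ioo (0 : ℝ) (1 / 2))
    (m l : ℕ → ℕ) (m0 : ℕ)
    (hmo : (fun n : ℕ => (m n : ℝ)) =o[atTop] fun n : ℕ => Real.sqrt (n : ℝ))
    (hmlim : Tendsto m atTop (nhds m0))
    (hlo : (fun n : ℕ => (l n : ℝ) - η * (n : ℝ)) =o[atTop] fun n : ℕ => Real.sqrt (n : ℝ)) :
    Tendsto (fun n : ℕ => p1 n (m n) (l n))
      (atTop ⊓ Filter.principal {n : ℕ | Even n ∧ 6 ≤ n}) (nhds (pCont m0 η)) :=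
  p1_tendsto_pCont' η hη m l m0 hmo hmlim hlo
end TwoRound
end

section
/- Fix η ∈ (0, 1/2) and m ∈ ℕ. Let U_1, …, U_m be i.i.d. uniform random variables on [0,1), and for an arc I modulo 1 let N_I count the points in I. Then, almost surely, the continuous universal victory event F^{(2)}_{∞,m,η} = { N_{(θ,θ+η)} ≥ 2 and N_{(θ,θ+η)} < m/2 for all θ ∈ [0,1) } occurs if and only if the following finite set of conditions holds: min_{j ∈ {1,…,m}} N_{(U_j, U_j+η)} ≥ 2 and max_{j ∈ {1,…,m}} N_{[U_j, U_j+η)} < m/2, where (U_j, U_j+η) is the open arc and [U_j, U_j+η) the half-open arc of length η starting at U_j, both taken modulo 1. -/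
open Finset Filter MeasureTheory

namespace TwoRound

/-- Number of the points `x 0, …, x (m-1)` lying in the open circular arc `(θ, θ+η)` mod 1. -/
noncomputable def NcountArc {m : ℕ} (x : Fin m → ℝ) (θ η : ℝ) : ℕ :=
  haveI := Classical.decPred fun j : Fin m => Int.fract (x j - θ) ∈ Set.Ioo (0 : ℝ) η
  (Finset.univ.filter fun j : Fin m => Int.fract (x j - θ) ∈ Set.Ioo (0 : ℝ) η).card

/-- Number of the points `x 0, …, x (m-1)` lying in the half-open circular arc `[θ, θ+η)`
mod 1. -/
noncomputable def NcountArcHalf {m : ℕ} (x : Fin m → ℝ) (θ η : ℝ) : ℕ :=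
  haveI := Classical.decPred fun j : Fin m => Int.fract (x j - θ) ∈ Set.Ico (0 : ℝ) η
  (Finset.univ.filter fun j : Fin m => Int.fract (x j - θ) ∈ Set.Ico (0 : ℝ) η).card

lemma fract_sub_fract (u v : ℝ) :
    Int.fract (Int.fract u - Int.fract v) = Int.fract (u - v) := by
  rw [Int.fract_eq_fract]
  refine ⟨⌊v⌋ - ⌊u⌋, ?_⟩
  push_cast
  simp only [Int.fract]
  ring

lemma fract_add_fract (u v : ℝ) :
    Int.fract (Int.fract u + Int.fract v) = Int.fract (u + v) := by
  rw [Int.fract_eq_fract]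
  refine ⟨-⌊v⌋ - ⌊u⌋, ?_⟩
  push_cast
  simp only [Int.fract]
  ring

lemma ncountArc_le_ncountArc {m : ℕ} (x : Fin m → ℝ) {θ1 θ2 η : ℝ}
    (h : ∀ k, Int.fract (x k - θ1) ∈ Set.Ioo (0:ℝ) η →
      Int.fract (x k - θ2) ∈ Set.Ioo (0:ℝ) η) :
    NcountArc x θ1 η ≤ NcountArc x θ2 η := by
  classical
  delta NcountArc
  apply Finset.card_le_card
  intro k hk
  simp only [Finset.mem_filter] at hk ⊢
  exact ⟨hk.1, h k hk.2⟩

lemma ncountArc_le_half {m : ℕ} (x : Fin m → ℝ) {θ1 θ2 η : ℝ}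
    (h : ∀ k, Int.fract (x k - θ1) ∈ Set.Ioo (0:ℝ) η →
      Int.fract (x k - θ2) ∈ Set.Ico (0:ℝ) η) :
    NcountArc x θ1 η ≤ NcountArcHalf x θ2 η := by
  classical
  delta NcountArc NcountArcHalf
  apply Finset.card_le_card
  intro k hk
  simp only [Finset.mem_filter] at hk ⊢
  exact ⟨hk.1, h k hk.2⟩

lemma ncountArc_eq_half {m : ℕ} (x : Fin m → ℝ) {θ1 θ2 η : ℝ}
    (h : ∀ k, Int.fract (x k - θ1) ∈ Set.Ioo (0:ℝ) η ↔
      Int.fract (x k - θ2) ∈ Set.Ico (0:ℝ) η) :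
    NcountArc x θ1 η = NcountArcHalf x θ2 η := by
  classical
  delta NcountArc NcountArcHalf
  congr 1
  ext k
  simp only [Finset.mem_filter]
  exact and_congr_right fun _ => h k

lemma ncountArc_congr {m : ℕ} (x : Fin m → ℝ) {θ1 θ2 : ℝ} (η : ℝ)
    (h : ∀ k, Int.fract (x k - θ1) = Int.fract (x k - θ2)) :
    NcountArc x θ1 η = NcountArc x θ2 η := by
  classical
  delta NcountArc
  congr 1
  ext k
  simp only [Finset.mem_filter, h k]

lemma ncountArc_fract {m : ℕ} (x : Fin m → ℝ) (θ η : ℝ) :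
    NcountArc x (Int.fract θ) η = NcountArc x θ η := by
  apply ncountArc_congr
  intro k
  conv_lhs => rw [← fract_sub_fract, Int.fract_fract, fract_sub_fract]

lemma exists_arc_le {m : ℕ} (hm : 1 ≤ m) (x : Fin m → ℝ) (η θ : ℝ) :
    ∃ j, NcountArc x (x j) η ≤ NcountArc x θ η := by
  obtain ⟨j, -, hj⟩ := Finset.exists_min_image Finset.univ
    (fun k => Int.fract (θ - x k)) ⟨⟨0, hm⟩, Finset.mem_univ _⟩
  refine ⟨j, ncountArc_le_ncountArc x (fun k hk => ?_)⟩
  obtain ⟨ha0, haη⟩ := hk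
  have hje : (0:ℝ) ≤ Int.fract (θ - x j) := Int.fract_nonneg _
  have hfl1 : Int.fract (x k - x j) < 1 := Int.fract_lt_one _
  have hfl2 : Int.fract (θ - x j) < 1 := Int.fract_lt_one _
  have hlt : Int.fract (θ - x j) < Int.fract (x k - x j) := by
    by_contra hcon
    push_neg at hcon
    have h2 : θ - x k = (θ - x j) - (x k - x j) := by ring
    have h1 : Int.fract (θ - x k)
        = Int.fract (θ - x j) - Int.fract (x k - x j) := by
      rw [h2, ← fract_sub_fract,
        Int.fract_eq_self.mpr ⟨sub_nonneg.mpr hcon, by linarith⟩]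
    have h4 := hj k (Finset.mem_univ k)
    rw [h1] at h4
    linarith
  have h2 : x k - θ = (x k - x j) - (θ - x j) := by ring
  have h3 : Int.fract (x k - θ)
      = Int.fract (x k - x j) - Int.fract (θ - x j) := by
    rw [h2, ← fract_sub_fract,
      Int.fract_eq_self.mpr ⟨sub_nonneg.mpr hlt.le, by linarith⟩]
  rw [h3]
  exact ⟨by linarith, by linarith⟩

lemma exists_le_half {m : ℕ} (hm : 1 ≤ m) (x : Fin m → ℝ) (η θ : ℝ) :
    ∃ j, NcountArc x θ η ≤ NcountArcHalf x (x j) η := by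
  obtain ⟨j, -, hj⟩ := Finset.exists_min_image Finset.univ
    (fun k => Int.fract (x k - θ)) ⟨⟨0, hm⟩, Finset.mem_univ _⟩
  refine ⟨j, ncountArc_le_half x (fun k hk => ?_)⟩
  obtain ⟨hd0, hdη⟩ := hk
  have hjk := hj k (Finset.mem_univ k)
  have hfl1 : Int.fract (x k - θ) < 1 := Int.fract_lt_one _
  have hj0 : (0:ℝ) ≤ Int.fract (x j - θ) := Int.fract_nonneg _
  have h2 : x k - x j = (x k - θ) - (x j - θ) := by ring
  have h3 : Int.fract (x k - x j)
      = Int.fract (x k - θ) - Int.fract (x j - θ) := by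
    rw [h2, ← fract_sub_fract,
      Int.fract_eq_self.mpr ⟨sub_nonneg.mpr hjk, by linarith⟩]
  rw [h3]
  exact ⟨by linarith, by linarith⟩

lemma exists_theta_half {m : ℕ} (hm : 1 ≤ m) (x : Fin m → ℝ) {η : ℝ}
    (hη0 : 0 < η) (hη1 : η < 1) (j : Fin m) :
    ∃ θ ∈ Set.Ico (0:ℝ) 1, NcountArc x θ η = NcountArcHalf x (x j) η := by
  set g : Fin m → ℝ := fun k => Int.fract (x k - x j) with hg
  set b : Fin m → ℝ := fun k => if g k < η then η - g k else 1 - g k with hb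
  obtain ⟨k0, -, hk0⟩ := Finset.exists_min_image Finset.univ b
    ⟨⟨0, hm⟩, Finset.mem_univ _⟩
  have hbpos : ∀ k, 0 < b k := by
    intro k
    have h1 : g k < 1 := Int.fract_lt_one _
    by_cases h : g k < η <;> simp only [hb, h, if_true, if_false] <;> linarith
  have hble1 : ∀ k, b k ≤ 1 := by
    intro k
    have h0 : 0 ≤ g k := Int.fract_nonneg _
    by_cases h : g k < η <;> simp only [hb, h, if_true, if_false] <;> linarith
  set ε := b k0 / 2 with hε
  have hε0 : 0 < ε := by have := hbpos k0; simp only [hε]; linarith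
  have hε1 : ε < 1 := by have := hble1 k0; simp only [hε]; linarith
  have hεlt : ∀ k, ε < b k := by
    intro k
    have h1 := hk0 k (Finset.mem_univ k)
    have := hbpos k0
    simp only [hε]
    linarith
  refine ⟨Int.fract (x j - ε), ⟨Int.fract_nonneg _, Int.fract_lt_one _⟩, ?_⟩
  apply ncountArc_eq_half
  intro k
  have hgk0 : 0 ≤ g k := Int.fract_nonneg _
  have hfr : Int.fract (x k - Int.fract (x j - ε)) = Int.fract (g k + ε) := by
    have e1 : Int.fract (x k - Int.fract (x j - ε))
        = Int.fract (x k - (x j - ε)) := by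
      conv_lhs => rw [← fract_sub_fract, Int.fract_fract, fract_sub_fract]
    have e2 : x k - (x j - ε) = (x k - x j) + ε := by ring
    have e3 : Int.fract ((x k - x j) + ε) = Int.fract (g k + ε) := by
      rw [← fract_add_fract, Int.fract_eq_self.mpr ⟨hε0.le, hε1⟩]
    rw [e1, e2, e3]
  rw [hfr]
  by_cases h : g k < η
  · have hεb := hεlt k
    simp only [hb, h, if_true] at hεb
    have hsum : g k + ε < η := by linarith
    rw [Int.fract_eq_self.mpr ⟨by linarith, by linarith⟩]
    constructor
    · intro _; exact ⟨hgk0, h⟩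
    · intro _; exact ⟨by linarith, hsum⟩
  · push_neg at h
    have hεb := hεlt k
    simp only [hb, not_lt.mpr h, if_false] at hεb
    rw [Int.fract_eq_self.mpr ⟨by linarith, by linarith⟩]
    constructor
    · intro hmem
      exact absurd hmem.2 (not_lt.mpr (by linarith))
    · intro hmem
      exact absurd hmem.2 (not_lt.mpr h)

/-- Computational characterization of the continuous universal victory event: almost surely,
the event `{∀ θ ∈ [0,1), 2 ≤ N_(θ,θ+η) and N_(θ,θ+η) < m/2}` occurs if and only if
`min_j N_(U_j, U_j+η) ≥ 2` and `max_j N_[U_j, U_j+η) < m/2`. -/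
theorem universal_event_finite_characterization (m : ℕ) (hm : 1 ≤ m)
    (η : ℝ) (hη : η ∈ Set.Ioo (0 : ℝ) (1 / 2)) :
    ∀ᵐ ω ∂(unifCube m),
      ((∀ θ ∈ Set.Ico (0 : ℝ) 1, 2 ≤ NcountArc ω θ η ∧ 2 * NcountArc ω θ η < m) ↔
        (∀ j : Fin m, 2 ≤ NcountArc ω (ω j) η ∧ 2 * NcountArcHalf ω (ω j) η < m)) := by
  obtain ⟨hη0, hη2⟩ := hη
  have hη1 : η < 1 := by linarith
  apply MeasureTheory.ae_of_all
  intro ω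
  constructor
  · intro hL j
    constructor
    · have h1 := hL (Int.fract (ω j)) ⟨Int.fract_nonneg _, Int.fract_lt_one _⟩
      rw [ncountArc_fract] at h1
      exact h1.1
    · obtain ⟨θ, hθ, heq⟩ := exists_theta_half hm ω hη0 hη1 j
      have h1 := hL θ hθ
      rw [heq] at h1
      exact h1.2
  · intro hR θ hθ
    constructor
    · obtain ⟨j, hj⟩ := exists_arc_le hm ω η θ
      exact le_trans (hR j).1 hj
    · obtain ⟨j, hj⟩ := exists_le_half hm ω η θ
      have h2 := (hR j).2
      omega

end TwoRound
end
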